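/- arXiv:1606.08951 — 3 statements merged into one kernel-verified Lean document; each statement's English description precedes it below -/
import Mathlib

section
/- Let Q = {x ∈ ℝ^n : x ≥ 0, Ax ≤ b} be a packing polyhedron. Then the 1-row Chvátal–Gomory closure 1𝒞(Q) is a 2-approximation of the Chvátal–Gomory closure 𝒞(Q); that is, for every c ∈ ℝ^n with c ≥ 0 one has sup{cᵀx : x ∈ 1𝒞(Q)} ≤ 2·sup{cᵀx : x ∈ 𝒞(Q)}. -/
open Finset

/-- Dot product of two vectors in `ℝ^n`. -/
def dotp {n : ℕ} (c x : Fin n → ℝ) : ℝ := ∑ j, c j * x j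

/-- A point of `ℝ^n` is integral if all its coordinates are integers. -/
def isIntPt {n : ℕ} (x : Fin n → ℝ) : Prop := ∀ j, ∃ z : ℤ, x j = (z : ℝ)

/-- The value `sup { cᵀ x : x ∈ S }`, in the extended reals. -/
noncomputable def supVal {n : ℕ} (c : Fin n → ℝ) (S : Set (Fin n → ℝ)) : EReal :=
  ⨆ x ∈ S, ((dotp c x : ℝ) : EReal)

/-- The value `inf { cᵀ x : x ∈ S }`, in the extended reals. -/
noncomputable def infVal {n : ℕ} (c : Fin n → ℝ) (S : Set (Fin n → ℝ)) : EReal :=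
  ⨅ x ∈ S, ((dotp c x : ℝ) : EReal)

/-- The polyhedron `{x ≥ 0 : A x ≤ b}`. -/
def packLP {n m : ℕ} (A : Matrix (Fin m) (Fin n) ℝ) (b : Fin m → ℝ) : Set (Fin n → ℝ) :=
  {x | (∀ j, 0 ≤ x j) ∧ ∀ i, dotp (A i) x ≤ b i}

/-- Aggregation closure of a packing polyhedron. -/
def aggP {n m : ℕ} (A : Matrix (Fin m) (Fin n) ℝ) (b : Fin m → ℝ) : Set (Fin n → ℝ) :=
  ⋂ lam : {l : Fin m → ℝ // ∀ i, 0 ≤ l i},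
    convexHull ℝ {x | (∀ j, 0 ≤ x j) ∧ isIntPt x ∧
      dotp (fun j => ∑ i, lam.1 i * A i j) x ≤ ∑ i, lam.1 i * b i}

/-- 1-row aggregation closure of a packing polyhedron. -/
def oneAggP {n m : ℕ} (A : Matrix (Fin m) (Fin n) ℝ) (b : Fin m → ℝ) : Set (Fin n → ℝ) :=
  ⋂ i : Fin m, convexHull ℝ {x | (∀ j, 0 ≤ x j) ∧ isIntPt x ∧ dotp (A i) x ≤ b i}

/-- Chvátal–Gomory closure of a set `P ⊆ ℝ^n`. -/
def cgClosure {n : ℕ} (P : Set (Fin n → ℝ)) : Set (Fin n → ℝ) :=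
  {x | ∀ (c : Fin n → ℤ) (δ : ℝ),
    (∀ y ∈ P, δ ≤ ∑ j, (c j : ℝ) * y j) → ((⌈δ⌉ : ℤ) : ℝ) ≤ ∑ j, (c j : ℝ) * x j}

/-- 1-row CG closure of a packing polyhedron. -/
def oneCGP {n m : ℕ} (A : Matrix (Fin m) (Fin n) ℝ) (b : Fin m → ℝ) : Set (Fin n → ℝ) :=
  ⋂ i : Fin m, cgClosure {x | (∀ j, 0 ≤ x j) ∧ dotp (A i) x ≤ b i}

/-- Covering polyhedron with bounds `u j` on coordinates `j ∈ J` (coordinates outside `J`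
are unbounded above). -/
def coverLP {n m : ℕ} (A : Matrix (Fin m) (Fin n) ℝ) (b : Fin m → ℝ)
    (J : Finset (Fin n)) (u : Fin n → ℝ) : Set (Fin n → ℝ) :=
  {x | (∀ j, 0 ≤ x j) ∧ (∀ j ∈ J, x j ≤ u j) ∧ ∀ i, b i ≤ dotp (A i) x}

/-- Aggregation closure of a covering polyhedron with bounds. -/
def aggC {n m : ℕ} (A : Matrix (Fin m) (Fin n) ℝ) (b : Fin m → ℝ)
    (J : Finset (Fin n)) (u : Fin n → ℝ) : Set (Fin n → ℝ) :=
  ⋂ lam : {l : Fin m → ℝ // ∀ i, 0 ≤ l i},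
    convexHull ℝ {x | (∀ j, 0 ≤ x j) ∧ isIntPt x ∧ (∀ j ∈ J, x j ≤ u j) ∧
      (∑ i, lam.1 i * b i) ≤ dotp (fun j => ∑ i, lam.1 i * A i j) x}

/-- 1-row aggregation closure of a covering polyhedron with bounds. -/
def oneAggC {n m : ℕ} (A : Matrix (Fin m) (Fin n) ℝ) (b : Fin m → ℝ)
    (J : Finset (Fin n)) (u : Fin n → ℝ) : Set (Fin n → ℝ) :=
  ⋂ i : Fin m, convexHull ℝ
    {x | (∀ j, 0 ≤ x j) ∧ isIntPt x ∧ (∀ j ∈ J, x j ≤ u j) ∧ b i ≤ dotp (A i) x}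

/-- 1-row CG closure of a covering polyhedron with bounds. -/
def oneCGC {n m : ℕ} (A : Matrix (Fin m) (Fin n) ℝ) (b : Fin m → ℝ)
    (J : Finset (Fin n)) (u : Fin n → ℝ) : Set (Fin n → ℝ) :=
  ⋂ i : Fin m, cgClosure {x | (∀ j, 0 ≤ x j) ∧ (∀ j ∈ J, x j ≤ u j) ∧ b i ≤ dotp (A i) x}

lemma exists_int_mul {q : ℚ} {M : ℕ} (h : q.den ∣ M) : ∃ z : ℤ, (z : ℝ) = (M : ℝ) * (q : ℝ) := by
  obtain ⟨k, hk⟩ := h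
  refine ⟨q.num * k, ?_⟩
  have hd : (q.den : ℝ) ≠ 0 := by exact_mod_cast q.den_ne_zero
  have hq : (q : ℝ) = (q.num : ℝ) / (q.den : ℝ) := by rw [Rat.cast_def]
  subst hk
  push_cast
  rw [hq]
  field_simp

lemma cg_nonneg {n : ℕ} {S : Set (Fin n → ℝ)} (hS : ∀ y ∈ S, ∀ j, 0 ≤ y j)
    {x : Fin n → ℝ} (hx : x ∈ cgClosure S) (j : Fin n) : 0 ≤ x j := by
  have := hx (fun k => if k = j then 1 else 0) 0 ?_
  · simpa using this
  · intro y hy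
    simpa using hS y hy j

lemma row_le {n m : ℕ} (A : Matrix (Fin m) (Fin n) ℝ) (b : Fin m → ℝ)
    (hAq : ∀ i j, ∃ q : ℚ, A i j = (q : ℝ)) (i : Fin m)
    {x : Fin n → ℝ}
    (hx : x ∈ cgClosure {y | (∀ j, 0 ≤ y j) ∧ dotp (A i) y ≤ b i}) :
    dotp (A i) x ≤ b i := by
  choose q hq using hAq i
  set M : ℕ := ∏ j, (q j).den with hM
  have hMpos : 0 < M := Finset.prod_pos (fun j _ => (q j).pos)
  have hz : ∀ j, ∃ z : ℤ, (z : ℝ) = (M : ℝ) * A i j := by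
    intro j
    rw [hq j]
    exact exists_int_mul (Finset.dvd_prod_of_mem _ (Finset.mem_univ j))
  choose z hzz using hz
  have hsum : ∀ y : Fin n → ℝ,
      ∑ j, ((-(z j) : ℤ) : ℝ) * y j = -((M : ℝ) * dotp (A i) y) := by
    intro y
    rw [dotp, Finset.mul_sum, ← Finset.sum_neg_distrib]
    refine Finset.sum_congr rfl (fun j _ => ?_)
    push_cast
    rw [hzz j]
    ring
  have key := hx (fun j => -(z j)) (-((M : ℝ) * b i)) ?_
  · rw [hsum x] at key
    have h1 : -((M : ℝ) * b i) ≤ ((⌈-((M : ℝ) * b i)⌉ : ℤ) : ℝ) := Int.le_ceil _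
    have h2 : (M : ℝ) * dotp (A i) x ≤ (M : ℝ) * b i := by linarith
    have hM' : (0 : ℝ) < (M : ℝ) := by exact_mod_cast hMpos
    exact le_of_mul_le_mul_left h2 hM'
  · intro y hy
    rw [hsum y]
    have hM' : (0 : ℝ) ≤ (M : ℝ) := by positivity
    have := mul_le_mul_of_nonneg_left hy.2 hM'
    linarith

lemma coord_zero {n m : ℕ} (A : Matrix (Fin m) (Fin n) ℝ) (b : Fin m → ℝ)
    (hA : ∀ i j, 0 ≤ A i j) (hb : ∀ i, 0 ≤ b i) (i : Fin m) (j : Fin n)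
    (hij : b i < A i j) {x : Fin n → ℝ}
    (hx : x ∈ cgClosure {y | (∀ j, 0 ≤ y j) ∧ dotp (A i) y ≤ b i}) :
    x j ≤ 0 := by
  have hApos : 0 < A i j := lt_of_le_of_lt (hb i) hij
  have key := hx (fun k => if k = j then -1 else 0) (-(b i / A i j)) ?_
  · have hceil : ⌈-(b i / A i j)⌉ = 0 := by
      rw [Int.ceil_eq_zero_iff, Set.mem_Ioc]
      have h1 : b i / A i j < 1 := (div_lt_one hApos).2 hij
      have h2 : 0 ≤ b i / A i j := div_nonneg (hb i) hApos.le
      constructor <;> linarith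
    rw [hceil] at key
    simpa using key
  · intro y hy
    have h1 : A i j * y j ≤ dotp (A i) y := by
      rw [dotp]
      exact Finset.single_le_sum (fun k _ => mul_nonneg (hA i k) (hy.1 k)) (Finset.mem_univ j)
    have h2 : y j ≤ b i / A i j := by
      rw [le_div_iff₀ hApos]
      calc y j * A i j = A i j * y j := by ring
        _ ≤ dotp (A i) y := h1
        _ ≤ b i := hy.2
    simpa using neg_le_neg h2

lemma half_mem {n m : ℕ} (A : Matrix (Fin m) (Fin n) ℝ) (b : Fin m → ℝ)
    (hA : ∀ i j, 0 ≤ A i j) (hb : ∀ i, 0 ≤ b i)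
    (hAq : ∀ i j, ∃ q : ℚ, A i j = (q : ℝ)) [Nonempty (Fin m)]
    {x : Fin n → ℝ} (hx : x ∈ oneCGP A b) :
    (fun j => x j / 2) ∈ cgClosure (packLP A b) := by
  obtain ⟨i0⟩ := ‹Nonempty (Fin m)›
  have hxi : ∀ i, x ∈ cgClosure {y | (∀ j, 0 ≤ y j) ∧ dotp (A i) y ≤ b i} := by
    intro i
    exact Set.mem_iInter.1 hx i
  have hx0 : ∀ j, 0 ≤ x j := fun j => cg_nonneg (fun y hy => hy.1) (hxi i0) j
  have hxQ : x ∈ packLP A b := ⟨hx0, fun i => row_le A b hAq i (hxi i)⟩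
  intro c' δ hval
  have h0Q : (0 : Fin n → ℝ) ∈ packLP A b := by
    refine ⟨fun j => le_refl 0, fun i => ?_⟩
    simp [dotp, hb i]
  have hδ0 : δ ≤ 0 := by simpa [dotp] using hval 0 h0Q
  have hceil0 : ⌈δ⌉ ≤ 0 := by rwa [Int.ceil_le, Int.cast_zero]
  have hsplit : ∀ y : Fin n → ℝ, ∑ j, (c' j : ℝ) * (y j / 2) = (∑ j, (c' j : ℝ) * y j) / 2 := by
    intro y
    rw [Finset.sum_div]
    exact Finset.sum_congr rfl (fun j _ => by ring)
  rcases lt_or_ge ⌈δ⌉ 0 with hlt | hge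
  · have hδx := hval x hxQ
    have hk : ((⌈δ⌉ : ℤ) : ℝ) ≤ -1 := by
      have : ⌈δ⌉ ≤ -1 := by omega
      exact_mod_cast this
    have hc1 : ((⌈δ⌉ : ℤ) : ℝ) < δ + 1 := Int.ceil_lt_add_one δ
    show ((⌈δ⌉ : ℤ) : ℝ) ≤ ∑ j, (c' j : ℝ) * (x j / 2)
    rw [hsplit x]
    linarith
  · have hk0 : ⌈δ⌉ = 0 := le_antisymm hceil0 hge
    have hδ1 : -1 < δ := by
      have := Int.ceil_lt_add_one δ
      rw [hk0] at this
      push_cast at this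
      linarith
    show ((⌈δ⌉ : ℤ) : ℝ) ≤ ∑ j, (c' j : ℝ) * (x j / 2)
    rw [hk0]
    push_cast
    refine Finset.sum_nonneg (fun j _ => ?_)
    rcases le_or_gt 0 (c' j) with hcj | hcj
    · have : (0:ℝ) ≤ (c' j : ℝ) := by exact_mod_cast hcj
      have := hx0 j
      positivity
    · have hcj1 : (c' j : ℝ) ≤ -1 := by
        have : c' j ≤ -1 := by omega
        exact_mod_cast this
      by_cases hex : ∃ i, b i < A i j
      · obtain ⟨i, hi⟩ := hex
        have hxj0 : x j = 0 :=
          le_antisymm (coord_zero A b hA hb i j hi (hxi i)) (hx0 j)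
        simp [hxj0]
      · push_neg at hex
        exfalso
        have hej : (fun k => if k = j then (1:ℝ) else 0) ∈ packLP A b := by
          constructor
          · intro k
            dsimp only
            split <;> norm_num
          · intro i
            have : dotp (A i) (fun k => if k = j then (1:ℝ) else 0) = A i j := by
              simp [dotp, mul_ite]
            rw [this]
            exact hex i
        have hv := hval _ hej
        have : ∑ k, (c' k : ℝ) * (if k = j then (1:ℝ) else 0) = (c' j : ℝ) := by
          simp [mul_ite]
        rw [this] at hv
        linarith

lemma ereal_le_two_mul {S : EReal} (hS : 0 ≤ S) : S ≤ 2 * S := by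
  induction S using EReal.rec with
  | bot => exact absurd hS (by simp)
  | coe r =>
    have hr : (0:ℝ) ≤ r := by exact_mod_cast hS
    have h2 : (2 : EReal) = ((2:ℝ) : EReal) := by norm_cast
    rw [h2, ← EReal.coe_mul]
    exact_mod_cast (by linarith : r ≤ 2 * r)
  | top =>
    rw [EReal.mul_top_of_pos (by norm_num)]

lemma ereal_two_mul_le {r : ℝ} {S : EReal} (h : (r : EReal) ≤ S) :
    ((2 * r : ℝ) : EReal) ≤ 2 * S := by
  induction S using EReal.rec with
  | bot => exact absurd h (by simp)
  | coe s =>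
    have hrs : r ≤ s := by exact_mod_cast h
    have h2 : (2 : EReal) = ((2:ℝ) : EReal) := by norm_cast
    rw [h2, ← EReal.coe_mul]
    exact_mod_cast (by linarith : 2 * r ≤ 2 * s)
  | top =>
    rw [EReal.mul_top_of_pos (by norm_num)]
    exact le_top

/-- For a packing polyhedron `Q = {x ≥ 0 : Ax ≤ b}` (with nonnegative
rational data), the 1-row Chvátal–Gomory closure is a 2-approximation of the CG closure. -/
theorem stmt1 {n m : ℕ} (A : Matrix (Fin m) (Fin n) ℝ) (b : Fin m → ℝ)
    (hA : ∀ i j, 0 ≤ A i j) (hb : ∀ i, 0 ≤ b i)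
    (hAq : ∀ i j, ∃ q : ℚ, A i j = (q : ℝ)) (hbq : ∀ i, ∃ q : ℚ, b i = (q : ℝ))
    (c : Fin n → ℝ) (hc : ∀ j, 0 ≤ c j) :
    supVal c (oneCGP A b) ≤ 2 * supVal c (cgClosure (packLP A b)) := by
  rw [supVal, supVal]
  cases isEmpty_or_nonempty (Fin m) with
  | inl he =>
    refine iSup₂_le fun x _ => ?_
    set xp : Fin n → ℝ := fun j => max (x j) 0 with hxp_def
    have hxp0 : ∀ j, 0 ≤ xp j := fun j => le_max_right _ _
    have hxp : xp ∈ cgClosure (packLP A b) := by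
      intro c' δ hval
      have h0 : (0 : Fin n → ℝ) ∈ packLP A b := ⟨fun j => le_rfl, fun i => isEmptyElim i⟩
      have hδ0 : δ ≤ 0 := by simpa [dotp] using hval 0 h0
      have hceil0 : ((⌈δ⌉ : ℤ) : ℝ) ≤ 0 := by
        exact_mod_cast (by rwa [Int.ceil_le, Int.cast_zero] : ⌈δ⌉ ≤ 0)
      refine le_trans hceil0 (Finset.sum_nonneg fun j _ => ?_)
      rcases le_or_gt 0 (c' j) with hcj | hcj
      · have : (0:ℝ) ≤ (c' j : ℝ) := by exact_mod_cast hcj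
        exact mul_nonneg this (hxp0 j)
      · exfalso
        have hcj1 : (c' j : ℝ) ≤ -1 := by
          have : c' j ≤ -1 := by omega
          exact_mod_cast this
        have ht : (0:ℝ) ≤ 1 - δ := by linarith
        have hpt : (fun k => if k = j then (1 - δ) else 0) ∈ packLP A b := by
          refine ⟨fun k => ?_, fun i => isEmptyElim i⟩
          dsimp only
          split
          · exact ht
          · exact le_refl 0
        have hv := hval _ hpt
        have hsum : ∑ k, (c' k : ℝ) * (if k = j then (1 - δ) else 0)
            = (c' j : ℝ) * (1 - δ) := by simp [mul_ite]
        rw [hsum] at hv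
        have : (c' j : ℝ) * (1 - δ) ≤ -1 * (1 - δ) := mul_le_mul_of_nonneg_right hcj1 ht
        linarith
    have h1 : ((dotp c xp : ℝ) : EReal)
        ≤ ⨆ y ∈ cgClosure (packLP A b), ((dotp c y : ℝ) : EReal) :=
      le_iSup₂ (f := fun y (_ : y ∈ cgClosure (packLP A b)) => ((dotp c y : ℝ) : EReal)) xp hxp
    have hle : dotp c x ≤ dotp c xp :=
      Finset.sum_le_sum fun j _ => mul_le_mul_of_nonneg_left (le_max_left _ _) (hc j)
    have h0p : (0:ℝ) ≤ dotp c xp :=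
      Finset.sum_nonneg fun j _ => mul_nonneg (hc j) (hxp0 j)
    have hS0 : (0 : EReal) ≤ ⨆ y ∈ cgClosure (packLP A b), ((dotp c y : ℝ) : EReal) :=
      le_trans (by exact_mod_cast h0p) h1
    calc ((dotp c x : ℝ) : EReal) ≤ ((dotp c xp : ℝ) : EReal) := by exact_mod_cast hle
      _ ≤ ⨆ y ∈ cgClosure (packLP A b), ((dotp c y : ℝ) : EReal) := h1
      _ ≤ 2 * ⨆ y ∈ cgClosure (packLP A b), ((dotp c y : ℝ) : EReal) :=
        ereal_le_two_mul hS0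
  | inr hne =>
    refine iSup₂_le fun x hx => ?_
    have hz := half_mem A b hA hb hAq hx
    have h1 : ((dotp c (fun j => x j / 2) : ℝ) : EReal)
        ≤ ⨆ y ∈ cgClosure (packLP A b), ((dotp c y : ℝ) : EReal) :=
      le_iSup₂ (f := fun y (_ : y ∈ cgClosure (packLP A b)) => ((dotp c y : ℝ) : EReal)) _ hz
    have h2 : dotp c x = 2 * dotp c (fun j => x j / 2) := by
      rw [dotp, dotp, Finset.mul_sum]
      exact Finset.sum_congr rfl fun j _ => by ring
    rw [h2]
    exact ereal_two_mul_le h1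
end

section
/- Let Q be a packing set in ℝ^n. Then its integer hull conv(Q ∩ ℤ^n) is also a packing set: there exist an index set I' and nonnegative (C^i, d_i) for i ∈ I' such that conv(Q ∩ ℤ^n) = {x ∈ ℝ^n : x ≥ 0, C^i x ≤ d_i for all i ∈ I'}. -/
open Finset

/-- A packing set in `ℝ^n`: a set of the form `{x ≥ 0 : aᵢᵀ x ≤ bᵢ ∀ i ∈ I}` with all the
data nonnegative, where `I` is an arbitrary index set. -/
def IsPackingSet {n : ℕ} (Q : Set (Fin n → ℝ)) : Prop :=
  ∃ (ι : Type) (a : ι → Fin n → ℝ) (β : ι → ℝ),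
    (∀ i j, 0 ≤ a i j) ∧ (∀ i, 0 ≤ β i) ∧
    Q = {x | (∀ j, 0 ≤ x j) ∧ ∀ i, dotp (a i) x ≤ β i}

/-!
Let `S = Q ∩ ℤⁿ` and let `B` be the set of coordinates carrying a positive coefficient in some
constraint of `Q`. Coordinates in `B` are bounded on `Q`, while those outside `B` can be raised
freely inside `Q`. Zeroing the coordinates outside `B` maps `S` onto a finite set `T` closed
under zeroing coordinates, and the convex hull of such a set is cut out by nonnegative valid
inequalities. Hence a point `x` satisfying every nonnegative inequality valid on `S` projects
into `conv T`, and restoring its coordinates outside `B` puts each point of `T` into a box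
`[0, ζ]` with `ζ ∈ S`, whose vertices lie in `S` because `S` is down-closed.
-/

open Set

variable {n : ℕ}

lemma dotp_eq_dotProduct (c x : Fin n → ℝ) : dotp c x = dotProduct c x := rfl

lemma dotp_indicator_comm (J : Set (Fin n)) (c x : Fin n → ℝ) :
    dotp c (J.indicator x) = dotp (J.indicator c) x :=
  Finset.sum_congr rfl fun j _ => by by_cases hj : j ∈ J <;> simp [hj]

lemma isIntPt_intCast (z : Fin n → ℤ) : isIntPt (fun j => (z j : ℝ)) :=
  fun j => ⟨z j, rfl⟩

lemma isIntPt_add {x y : Fin n → ℝ} (hx : isIntPt x) (hy : isIntPt y) : isIntPt (x + y) := by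
  intro j
  obtain ⟨p, hp⟩ := hx j
  obtain ⟨q, hq⟩ := hy j
  exact ⟨p + q, by simp [hp, hq]⟩

lemma isIntPt_indicator {x : Fin n → ℝ} (hx : isIntPt x) (J : Set (Fin n)) :
    isIntPt (J.indicator x) := by
  intro j
  by_cases hj : j ∈ J
  · simpa [hj] using hx j
  · exact ⟨0, by simp [hj]⟩

lemma finite_isIntPt_inter_Icc (l u : Fin n → ℝ) : ({x | isIntPt x} ∩ Icc l u).Finite := by
  refine (Set.Finite.pi fun j => (Set.finite_Icc ⌈l j⌉ ⌊u j⌋).image (Int.cast : ℤ → ℝ)).subset ?_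
  rintro x ⟨hx, hlx, hxu⟩ j -
  obtain ⟨m, hm⟩ := hx j
  exact ⟨m, ⟨Int.ceil_le.2 (hm ▸ hlx j), Int.le_floor.2 (hm ▸ hxu j)⟩, hm.symm⟩

lemma Icc_zero_subset_convexHull {ι : Type*} [Finite ι] {S : Set (ι → ℝ)} {z : ι → ℝ}
    (hz : 0 ≤ z) (hS : univ.pi (fun j => ({0, z j} : Set ℝ)) ⊆ S) :
    Icc 0 z ⊆ convexHull ℝ S := by
  intro w ⟨hw0, hwz⟩
  refine convexHull_mono hS ?_
  rw [convexHull_pi]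
  intro j _
  have hzj : (0 : ℝ) ≤ z j := hz j
  show w j ∈ convexHull ℝ {0, z j}
  rw [convexHull_pair, segment_eq_Icc hzj]
  exact ⟨hw0 j, hwz j⟩

/-- The smallest packing set containing `S`. -/
def packingHull (S : Set (Fin n → ℝ)) : Set (Fin n → ℝ) :=
  {x | 0 ≤ x ∧ ∀ c δ, 0 ≤ c → 0 ≤ δ → (∀ z ∈ S, dotp c z ≤ δ) → dotp c x ≤ δ}

lemma isPackingSet_packingHull (S : Set (Fin n → ℝ)) : IsPackingSet (packingHull S) := by
  refine ⟨{p : (Fin n → ℝ) × ℝ // 0 ≤ p.1 ∧ 0 ≤ p.2 ∧ ∀ z ∈ S, dotp p.1 z ≤ p.2},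
    fun p => p.1.1, fun p => p.1.2, fun p => p.2.1, fun p => p.2.2.1, ?_⟩
  ext x
  exact ⟨fun ⟨hx0, hx⟩ => ⟨hx0, fun p => hx _ _ p.2.1 p.2.2.1 p.2.2.2⟩,
    fun ⟨hx0, hx⟩ => ⟨hx0, fun c δ hc hδ hS => hx ⟨(c, δ), hc, hδ, hS⟩⟩⟩

lemma convex_packingHull (S : Set (Fin n → ℝ)) : Convex ℝ (packingHull S) := by
  rintro x ⟨hx0, hx⟩ y ⟨hy0, hy⟩ s t hs ht hst
  refine ⟨add_nonneg (smul_nonneg hs hx0) (smul_nonneg ht hy0), fun c δ hc hδ hS => ?_⟩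
  calc dotp c (s • x + t • y) = s * dotp c x + t * dotp c y := by
        simp only [dotp_eq_dotProduct, dotProduct_add, dotProduct_smul, smul_eq_mul]
    _ ≤ s * δ + t * δ := by gcongr; exacts [hx c δ hc hδ hS, hy c δ hc hδ hS]
    _ = δ := by rw [← add_mul, hst, one_mul]

lemma convexHull_subset_packingHull {S : Set (Fin n → ℝ)} (hS : ∀ z ∈ S, 0 ≤ z) :
    convexHull ℝ S ⊆ packingHull S :=
  convexHull_min (fun z hz => ⟨hS z hz, fun _ _ _ _ hvalid => hvalid z hz⟩) (convex_packingHull S)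

lemma indicator_mem_packingHull {S T : Set (Fin n → ℝ)} {J : Set (Fin n)}
    (hST : ∀ z ∈ S, J.indicator z ∈ T) {x : Fin n → ℝ} (hx : x ∈ packingHull S) :
    J.indicator x ∈ packingHull T := by
  refine ⟨indicator_nonneg fun j _ => hx.1 j, fun c δ hc hδ hT => ?_⟩
  rw [dotp_indicator_comm]
  refine hx.2 _ δ (indicator_nonneg fun j _ => hc j) hδ fun z hz => ?_
  rw [← dotp_indicator_comm]
  exact hT _ (hST z hz)

/-- Separate `x` from `conv T` by `c ⬝ v < u`; since `0 ∈ T`, `u > 0`, and since `T` is closed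
under zeroing coordinates, the positive part of `c` still gives an inequality valid on `T`. -/
theorem mem_convexHull_of_mem_packingHull {T : Set (Fin n → ℝ)} (hT : T.Finite) (h0 : 0 ∈ T)
    (hTind : ∀ z ∈ T, ∀ J : Set (Fin n), J.indicator z ∈ T) {x : Fin n → ℝ}
    (hx : x ∈ packingHull T) : x ∈ convexHull ℝ T := by
  by_contra hxT
  obtain ⟨f, u, hfT, hfx⟩ := geometric_hahn_banach_closed_point (convex_convexHull ℝ T)
    (hT.isCompact_convexHull ℝ).isClosed hxT
  set c := (dotProductEquiv ℝ (Fin n)).symm f.toLinearMap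
  have hfc : ∀ v, f v = dotp c v := fun v =>
    (LinearMap.congr_fun ((dotProductEquiv ℝ (Fin n)).apply_symm_apply f.toLinearMap) v).symm
  have hu : 0 < u := by simpa using hfT 0 (subset_convexHull ℝ T h0)
  set J : Set (Fin n) := {j | 0 < c j}
  have hvalid : ∀ z ∈ T, dotp (J.indicator c) z ≤ u := fun z hz => by
    rw [← dotp_indicator_comm, ← hfc]
    exact (hfT _ (subset_convexHull ℝ T (hTind z hz J))).le
  have hcJ : c ≤ J.indicator c := fun j =>
    le_indicator_apply (fun _ => le_rfl) (fun hj => not_lt.1 hj)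
  have hxJ : dotp (J.indicator c) x ≤ u :=
    hx.2 _ u (indicator_nonneg fun j hj => le_of_lt hj) hu.le hvalid
  rw [hfc] at hfx
  exact (dotProduct_le_dotProduct_of_nonneg_right hcJ hx.1).trans hxJ |>.not_gt hfx

section PackingSet

variable {ι : Type*} (a : ι → Fin n → ℝ) (β : ι → ℝ)

def packingSet : Set (Fin n → ℝ) := {x | 0 ≤ x ∧ ∀ i, dotp (a i) x ≤ β i}

def intPoints (Q : Set (Fin n → ℝ)) : Set (Fin n → ℝ) := {x | x ∈ Q ∧ isIntPt x}

def activeCoords : Set (Fin n) := {j | ∃ i, 0 < a i j}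

variable {a β}

lemma zero_mem_packingSet (hβ : 0 ≤ β) : 0 ∈ packingSet a β :=
  ⟨le_rfl, fun i => by simpa [dotp] using hβ i⟩

lemma mem_packingSet_of_le (ha : ∀ i, 0 ≤ a i) {z w : Fin n → ℝ} (hz : z ∈ packingSet a β)
    (hw : 0 ≤ w) (hwz : w ≤ z) : w ∈ packingSet a β :=
  ⟨hw, fun i => (dotProduct_le_dotProduct_of_nonneg_left hwz (ha i)).trans (hz.2 i)⟩

lemma indicator_mem_intPoints (ha : ∀ i, 0 ≤ a i) {z : Fin n → ℝ}
    (hz : z ∈ intPoints (packingSet a β)) (J : Set (Fin n)) :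
    J.indicator z ∈ intPoints (packingSet a β) :=
  ⟨mem_packingSet_of_le ha hz.1 (indicator_nonneg fun j _ => hz.1.1 j)
    (indicator_le_self' fun j _ => hz.1.1 j), isIntPt_indicator hz.2 J⟩

lemma Icc_zero_subset_convexHull_intPoints (ha : ∀ i, 0 ≤ a i) {z : Fin n → ℝ}
    (hz : z ∈ intPoints (packingSet a β)) :
    Icc 0 z ⊆ convexHull ℝ (intPoints (packingSet a β)) := by
  refine Icc_zero_subset_convexHull hz.1.1 fun v hv => ?_
  have hv_eq : v = {j | v j = z j}.indicator z := funext fun j => by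
    by_cases h : v j = z j
    · simp [h]
    · simpa [h] using (hv j trivial).resolve_right h
  rw [hv_eq]
  exact indicator_mem_intPoints ha hz _

lemma dotp_indicator_compl_activeCoords (ha : ∀ i, 0 ≤ a i) (i : ι) (v : Fin n → ℝ) :
    dotp (a i) ((activeCoords a)ᶜ.indicator v) = 0 := by
  rw [dotp_indicator_comm]
  refine Finset.sum_eq_zero fun j _ => ?_
  by_cases hj : j ∈ activeCoords a
  · simp [hj]
  · have : a i j = 0 := le_antisymm (not_lt.1 fun h => hj ⟨i, h⟩) (ha i j)
    simp [hj, this]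

lemma indicator_compl_activeCoords_add_mem (ha : ∀ i, 0 ≤ a i) {z v : Fin n → ℝ}
    (hz : z ∈ packingSet a β) (hv : 0 ≤ v) :
    (activeCoords a)ᶜ.indicator v + z ∈ packingSet a β :=
  ⟨add_nonneg (indicator_nonneg fun j _ => hv j) hz.1, fun i => by
    rw [dotp_eq_dotProduct, dotProduct_add, ← dotp_eq_dotProduct,
      ← dotp_eq_dotProduct, dotp_indicator_compl_activeCoords ha, zero_add]
    exact hz.2 i⟩

lemma indicator_compl_activeCoords_add_mem_convexHull (ha : ∀ i, 0 ≤ a i) {x z : Fin n → ℝ}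
    (hx : 0 ≤ x) (hz : z ∈ intPoints (packingSet a β)) :
    (activeCoords a)ᶜ.indicator x + (activeCoords a).indicator z ∈
      convexHull ℝ (intPoints (packingSet a β)) := by
  set B := activeCoords a
  have hBz := indicator_mem_intPoints ha hz B
  have hζ : Bᶜ.indicator (fun j => (⌈x j⌉ : ℝ)) + B.indicator z ∈ intPoints (packingSet a β) :=
    ⟨indicator_compl_activeCoords_add_mem ha hBz.1 fun j => (hx j).trans (Int.le_ceil _),
      isIntPt_add (isIntPt_indicator (isIntPt_intCast _) _) hBz.2⟩
  exact Icc_zero_subset_convexHull_intPoints ha hζ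
    ⟨add_nonneg (indicator_nonneg fun j _ => hx j) hBz.1.1,
      add_le_add_left (fun j => indicator_le_indicator (Int.le_ceil _)) _⟩

lemma exists_indicator_activeCoords_le (ha : ∀ i, 0 ≤ a i) :
    ∃ M : Fin n → ℝ, ∀ z ∈ packingSet a β, (activeCoords a).indicator z ≤ M := by
  have hcoord : ∀ j, ∃ m, ∀ z ∈ packingSet a β, (activeCoords a).indicator z j ≤ m := by
    intro j
    by_cases hj : j ∈ activeCoords a
    · obtain ⟨i, hij⟩ := id hj
      refine ⟨β i / a i j, fun z hz => ?_⟩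
      rw [indicator_of_mem hj, le_div_iff₀ hij, mul_comm]
      exact (Finset.single_le_sum (fun k _ => mul_nonneg (ha i k) (hz.1 k))
        (Finset.mem_univ j)).trans (hz.2 i)
    · exact ⟨0, fun z _ => by simp [hj]⟩
  choose M hM using hcoord
  exact ⟨M, fun z hz j => hM j z hz⟩

lemma finite_image_indicator_activeCoords (ha : ∀ i, 0 ≤ a i) :
    ((activeCoords a).indicator '' intPoints (packingSet a β)).Finite := by
  obtain ⟨M, hM⟩ := exists_indicator_activeCoords_le ha (β := β)
  refine (finite_isIntPt_inter_Icc 0 M).subset ?_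
  rintro _ ⟨z, hz, rfl⟩
  exact ⟨isIntPt_indicator hz.2 _, indicator_nonneg fun j _ => hz.1.1 j, hM z hz.1⟩

theorem packingHull_intPoints_subset_convexHull (ha : ∀ i, 0 ≤ a i) (hβ : 0 ≤ β) :
    packingHull (intPoints (packingSet a β)) ⊆ convexHull ℝ (intPoints (packingSet a β)) := by
  set S := intPoints (packingSet a β)
  set B := activeCoords a
  intro x hx
  have h0 : (0 : Fin n → ℝ) ∈ B.indicator '' S :=
    ⟨0, ⟨zero_mem_packingSet hβ, fun _ => ⟨0, by simp⟩⟩, by simp⟩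
  have hTind : ∀ y ∈ B.indicator '' S, ∀ J : Set (Fin n), J.indicator y ∈ B.indicator '' S := by
    rintro _ ⟨z, hz, rfl⟩ J
    refine ⟨J.indicator z, indicator_mem_intPoints ha hz J, ?_⟩
    rw [indicator_indicator, indicator_indicator, inter_comm]
  have hBx : B.indicator x ∈ convexHull ℝ (B.indicator '' S) :=
    mem_convexHull_of_mem_packingHull (finite_image_indicator_activeCoords ha) h0 hTind
      (indicator_mem_packingHull (fun z hz => Set.mem_image_of_mem _ hz) hx)
  have hlift : B.indicator '' S ⊆ (fun y => Bᶜ.indicator x + y) ⁻¹' convexHull ℝ S := by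
    rintro _ ⟨z, hz, rfl⟩
    exact indicator_compl_activeCoords_add_mem_convexHull ha hx.1 hz
  simpa [indicator_compl_add_self] using
    convexHull_min hlift ((convex_convexHull ℝ S).translate_preimage_right _) hBx

theorem convexHull_intPoints_packingSet (ha : ∀ i, 0 ≤ a i) (hβ : 0 ≤ β) :
    convexHull ℝ (intPoints (packingSet a β)) = packingHull (intPoints (packingSet a β)) :=
  (convexHull_subset_packingHull fun _ hz => hz.1.1).antisymm
    (packingHull_intPoints_subset_convexHull ha hβ)

end PackingSet

/-- The integer hull `conv(Q ∩ ℤ^n)` of a packing set `Q` is again a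
packing set. -/
theorem stmt9 {n : ℕ} (Q : Set (Fin n → ℝ)) (hQ : IsPackingSet Q) :
    IsPackingSet (convexHull ℝ {x | x ∈ Q ∧ isIntPt x}) := by
  obtain ⟨ι, a, β, ha, hβ, rfl⟩ := hQ
  change IsPackingSet (convexHull ℝ (intPoints (packingSet a β)))
  rw [convexHull_intPoints_packingSet ha hβ]
  exact isPackingSet_packingHull _
end

section
/- Let D be a nonnegative k×n real matrix and f a nonnegative k-vector with D_{ij} ≤ f_i for all i ∈ [k] and j ∈ [n], and let c ∈ ℝ^n with c ≥ 0. Then sup{cᵀx : x ∈ ℝ^n, x ≥ 0, Dx ≤ f} ≤ (k+1)·sup{cᵀx : x ∈ ℤ^n, x ≥ 0, Dx ≤ f} (as an inequality in the extended reals; in particular if the LP value is unbounded then so is the IP value). -/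
open Finset

/-!
If the integer optimum `M` is finite, then `M ≥ 0`, every `c j ≤ M` (unit vectors are feasible
since `D i j ≤ f i`), and `c` vanishes on the zero columns of `D` (all their integer multiples are
feasible). With `D ≥ 0` the latter makes `c` nonpositive on `{v ≥ 0 | D v = 0}`, so a
Carathéodory argument — moving along kernel vectors of the columns in the support — replaces any
LP-feasible `x` by some `y ≥ 0` with `D y = D x`, `cᵀx ≤ cᵀy` and at most `k` nonzero
coordinates. Rounding `y` down gives a feasible integer point, and loses at most one `c j ≤ M`
per nonzero coordinate, so `cᵀx ≤ M + k M`.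
-/

open Matrix

section SupportReduction

variable {m n : Type*} [Fintype n]

lemma exists_ne_zero_mulVec_eq_zero_of_card_lt [Fintype m] (A : Matrix m n ℝ) (S : Finset n)
    (hS : Fintype.card m < #S) :
    ∃ d : n → ℝ, d ≠ 0 ∧ A *ᵥ d = 0 ∧ ∀ j ∉ S, d j = 0 := by
  classical
  let L := A.mulVecLin.prod (LinearMap.funLeft ℝ ℝ (Subtype.val : {j // j ∉ S} → n))
  have hdim : Module.finrank ℝ ((m → ℝ) × ({j // j ∉ S} → ℝ)) < Module.finrank ℝ (n → ℝ) := by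
    have := S.card_le_univ
    simp only [Module.finrank_prod, Module.finrank_pi, Fintype.card_subtype_compl,
      Fintype.card_coe]
    omega
  obtain ⟨d, hd, hd0⟩ :=
    (Submodule.ne_bot_iff _).mp (LinearMap.ker_ne_bot_of_finrank_lt (f := L) hdim)
  exact ⟨d, hd0, congrArg Prod.fst hd, fun j hj => congrFun (congrArg Prod.snd hd) ⟨j, hj⟩⟩

lemma exists_add_smul_nonneg_card_support_lt {x e : n → ℝ} (hx : 0 ≤ x)
    (he : ∀ j, x j = 0 → e j = 0) (hneg : ∃ j, e j < 0) :
    ∃ t : ℝ, 0 ≤ t ∧ 0 ≤ x + t • e ∧ #{j | (x + t • e) j ≠ 0} < #{j | x j ≠ 0} := by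
  obtain ⟨j₁, hj₁⟩ := hneg
  obtain ⟨j₀, hj₀, hmin⟩ := Finset.exists_min_image {j | e j < 0} (fun j => x j / -e j)
    ⟨j₁, by simpa using hj₁⟩
  simp only [Finset.mem_filter, Finset.mem_univ, true_and] at hj₀ hmin
  have hxj₀ : x j₀ ≠ 0 := fun h => hj₀.ne (he j₀ h)
  refine ⟨x j₀ / -e j₀, div_nonneg (hx j₀) (by linarith), fun j => ?_, Finset.card_lt_card ?_⟩
  · by_cases hej : e j < 0
    · have := (le_div_iff₀ (neg_pos.mpr hej)).mp (hmin j hej)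
      simp only [Pi.zero_apply, Pi.add_apply, Pi.smul_apply, smul_eq_mul]
      linarith
    · have : 0 ≤ x j₀ / -e j₀ * e j := mul_nonneg (div_nonneg (hx j₀) (by linarith)) (by linarith)
      have hxj : 0 ≤ x j := hx j
      simp only [Pi.zero_apply, Pi.add_apply, Pi.smul_apply, smul_eq_mul]
      linarith
  · refine Finset.ssubset_iff_of_subset (fun j => ?_) |>.mpr ⟨j₀, by simpa using hxj₀, ?_⟩
    · simp only [Finset.mem_filter, Finset.mem_univ, true_and, Pi.add_apply, Pi.smul_apply,
        smul_eq_mul]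
      exact fun h hx0 => h (by simp [hx0, he j hx0])
    · simp only [Finset.mem_filter, Finset.mem_univ, true_and, Pi.add_apply, Pi.smul_apply,
        smul_eq_mul, not_not]
      have := hj₀.ne
      field_simp
      ring

lemma exists_signed_kernel_direction {A : Matrix m n ℝ} {c d : n → ℝ}
    (hrec : ∀ v, 0 ≤ v → A *ᵥ v = 0 → c ⬝ᵥ v ≤ 0) (hd : d ≠ 0) (hAd : A *ᵥ d = 0) :
    ∃ e, (e = d ∨ e = -d) ∧ 0 ≤ c ⬝ᵥ e ∧ ∃ j, e j < 0 := by
  by_cases hcd : 0 ≤ c ⬝ᵥ d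
  · by_cases hneg : ∃ j, d j < 0
    · exact ⟨d, .inl rfl, hcd, hneg⟩
    · push Not at hneg
      have hd' := hrec d hneg hAd
      obtain ⟨j, hj⟩ := Function.ne_iff.mp hd
      exact ⟨-d, .inr rfl, by simp [hd'], j, by simpa using lt_of_le_of_ne (hneg j) (Ne.symm hj)⟩
  · push Not at hcd
    by_cases hpos : ∃ j, 0 < d j
    · obtain ⟨j, hj⟩ := hpos
      exact ⟨-d, .inr rfl, by simp [hcd.le], j, by simpa using hj⟩
    · push Not at hpos
      have := hrec (-d) (fun j => by simpa using hpos j) (by rw [mulVec_neg, hAd, neg_zero])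
      simp only [dotProduct_neg] at this
      linarith

theorem exists_card_support_le_of_dotProduct_nonpos [Fintype m] (A : Matrix m n ℝ) {c : n → ℝ}
    (hrec : ∀ v, 0 ≤ v → A *ᵥ v = 0 → c ⬝ᵥ v ≤ 0) {x : n → ℝ} (hx : 0 ≤ x) :
    ∃ y, 0 ≤ y ∧ A *ᵥ y = A *ᵥ x ∧ c ⬝ᵥ x ≤ c ⬝ᵥ y ∧ #{j | y j ≠ 0} ≤ Fintype.card m := by
  induction hN : #{j | x j ≠ 0} using Nat.strong_induction_on generalizing x with
  | _ N ih =>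
  by_cases hle : N ≤ Fintype.card m
  · exact ⟨x, hx, rfl, le_rfl, hN ▸ hle⟩
  obtain ⟨d, hd0, hAd, hdS⟩ :=
    exists_ne_zero_mulVec_eq_zero_of_card_lt A {j | x j ≠ 0} (by omega)
  obtain ⟨e, hed, hce, hneg⟩ := exists_signed_kernel_direction hrec hd0 hAd
  have hAe : A *ᵥ e = 0 := by rcases hed with rfl | rfl <;> simp only [mulVec_neg, hAd, neg_zero]
  have hex : ∀ j, x j = 0 → e j = 0 := fun j hj => by
    have := hdS j (by simp [hj])
    rcases hed with rfl | rfl <;> simp [this]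
  obtain ⟨t, ht, hx', hcard⟩ := exists_add_smul_nonneg_card_support_lt hx hex hneg
  obtain ⟨y, hy, hAy, hcy, hycard⟩ := ih _ (hN ▸ hcard) hx' rfl
  refine ⟨y, hy, by rw [hAy, mulVec_add, mulVec_smul, hAe, smul_zero, add_zero], ?_, hycard⟩
  calc c ⬝ᵥ x ≤ c ⬝ᵥ (x + t • e) := by
        rw [dotProduct_add, dotProduct_smul]
        exact le_add_of_nonneg_right (smul_nonneg ht hce)
    _ ≤ c ⬝ᵥ y := hcy

end SupportReduction

lemma sum_mul_fract_le_card_support_mul {n : Type*} [Fintype n] {c x : n → ℝ} {M : ℝ}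
    (hc : 0 ≤ c) (hcM : ∀ j, c j ≤ M) :
    ∑ j, c j * Int.fract (x j) ≤ #{j | x j ≠ 0} * M := by
  rw [← sum_filter_of_ne (p := fun j => x j ≠ 0) fun j _ h hx => h (by simp [hx])]
  calc ∑ j with x j ≠ 0, c j * Int.fract (x j) ≤ ∑ j with x j ≠ 0, M :=
        sum_le_sum fun j _ => (mul_le_of_le_one_right (hc j) (Int.fract_lt_one _).le).trans (hcM j)
    _ = #{j | x j ≠ 0} * M := by rw [sum_const, nsmul_eq_mul]

lemma le_supVal {n : ℕ} (c : Fin n → ℝ) {S : Set (Fin n → ℝ)} {x : Fin n → ℝ} (hx : x ∈ S) :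
    (dotp c x : EReal) ≤ supVal c S :=
  le_iSup₂_of_le x hx le_rfl

lemma supVal_le_coe_iff {n : ℕ} {c : Fin n → ℝ} {S : Set (Fin n → ℝ)} {M : ℝ} :
    supVal c S ≤ M ↔ ∀ x ∈ S, dotp c x ≤ M := by
  simp only [supVal, iSup₂_le_iff, EReal.coe_le_coe_iff]

lemma dotp_single {n : ℕ} (c : Fin n → ℝ) (j : Fin n) (t : ℝ) :
    dotp c (Pi.single j t) = c j * t :=
  dotProduct_single c t j

def packIP {n m : ℕ} (A : Matrix (Fin m) (Fin n) ℝ) (b : Fin m → ℝ) : Set (Fin n → ℝ) :=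
  {x | (∀ j, 0 ≤ x j) ∧ isIntPt x ∧ ∀ i, dotp (A i) x ≤ b i}

section Packing

variable {k n : ℕ} {A : Matrix (Fin k) (Fin n) ℝ} {b : Fin k → ℝ} {c : Fin n → ℝ} {M : ℝ}

lemma zero_mem_packIP (hb : ∀ i, 0 ≤ b i) : 0 ∈ packIP A b :=
  ⟨fun _ => le_rfl, fun _ => ⟨0, by simp⟩, fun i => by simpa [dotp] using hb i⟩

lemma natCast_single_mem_packIP {j : Fin n} {t : ℕ} (h : ∀ i, A i j * t ≤ b i) :
    Pi.single j (t : ℝ) ∈ packIP A b := by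
  refine ⟨fun j' => ?_, fun j' => ?_, fun i => ?_⟩
  · rw [Pi.single_apply]
    split_ifs <;> positivity
  · refine ⟨(Pi.single j (t : ℤ) : Fin n → ℤ) j', ?_⟩
    rw [Pi.single_apply, Pi.single_apply]
    split_ifs <;> simp
  · simpa [dotp_single] using h i

lemma floor_mem_packIP (hA : ∀ i j, 0 ≤ A i j) {x : Fin n → ℝ} (hx : x ∈ packLP A b) :
    (fun j => (⌊x j⌋ : ℝ)) ∈ packIP A b :=
  ⟨fun j => Int.cast_nonneg (Int.floor_nonneg.2 (hx.1 j)), fun _ => ⟨_, rfl⟩, fun i =>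
    (sum_le_sum fun j _ => mul_le_mul_of_nonneg_left (Int.floor_le _) (hA i j)).trans (hx.2 i)⟩

lemma coord_le_of_packIP_bound {j : Fin n} (hAb : ∀ i, A i j ≤ b i)
    (hM : ∀ y ∈ packIP A b, dotp c y ≤ M) : c j ≤ M := by
  simpa [dotp_single] using hM _ (natCast_single_mem_packIP (t := 1) (by simpa using hAb))

lemma coord_eq_zero_of_packIP_bound (hb : ∀ i, 0 ≤ b i) {j : Fin n} (hcj : 0 ≤ c j)
    (hAj : ∀ i, A i j = 0) (hM : ∀ y ∈ packIP A b, dotp c y ≤ M) : c j = 0 := by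
  by_contra hne
  obtain ⟨t, ht⟩ := exists_nat_gt (M / c j)
  have := hM _ (natCast_single_mem_packIP (j := j) (t := t) (by simpa [hAj] using hb))
  rw [dotp_single] at this
  rw [div_lt_iff₀ (lt_of_le_of_ne hcj (Ne.symm hne))] at ht
  linarith

lemma dotProduct_nonpos_of_packIP_bound (hA : ∀ i j, 0 ≤ A i j) (hb : ∀ i, 0 ≤ b i)
    (hc : ∀ j, 0 ≤ c j) (hM : ∀ y ∈ packIP A b, dotp c y ≤ M) :
    ∀ v, 0 ≤ v → A *ᵥ v = 0 → c ⬝ᵥ v ≤ 0 := by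
  intro v hv hAv
  refine (sum_eq_zero fun j _ => ?_).le
  rcases (hv j).eq_or_lt with hvj | hvj
  · simp [← hvj]
  have hAj : ∀ i, A i j = 0 := fun i =>
    have hrow : ∑ j, A i j * v j = 0 := congrFun hAv i
    (mul_eq_zero.mp <| (sum_eq_zero_iff_of_nonneg fun j _ => mul_nonneg (hA i j) (hv j)).mp
      hrow j (mem_univ j)).resolve_right hvj.ne'
  simp [coord_eq_zero_of_packIP_bound hb (hc j) hAj hM]

theorem dotp_le_of_packIP_bound (hA : ∀ i j, 0 ≤ A i j) (hb : ∀ i, 0 ≤ b i)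
    (hAb : ∀ i j, A i j ≤ b i) (hc : ∀ j, 0 ≤ c j) (hM : ∀ y ∈ packIP A b, dotp c y ≤ M)
    {x : Fin n → ℝ} (hx : x ∈ packLP A b) : dotp c x ≤ (k + 1) * M := by
  obtain ⟨y, hy, hAy, hxy, hcard⟩ := exists_card_support_le_of_dotProduct_nonpos A
    (dotProduct_nonpos_of_packIP_bound hA hb hc hM) hx.1
  have hyLP : y ∈ packLP A b := ⟨hy, fun i => (congrFun hAy i).trans_le (hx.2 i)⟩
  have hfloor := hM _ (floor_mem_packIP hA hyLP)
  have hfract := sum_mul_fract_le_card_support_mul (x := y) hc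
    (fun j => coord_le_of_packIP_bound (hAb · j) hM)
  have hM0 : 0 ≤ M := by simpa [dotp] using hM 0 (zero_mem_packIP hb)
  rw [Fintype.card_fin] at hcard
  calc dotp c x ≤ dotp c y := hxy
    _ = dotp c (fun j => ⌊y j⌋) + ∑ j, c j * Int.fract (y j) := by
        simp only [dotp, ← sum_add_distrib, ← mul_add, Int.floor_add_fract]
    _ ≤ M + k * M := add_le_add hfloor (hfract.trans (by gcongr))
    _ = (k + 1) * M := by ring

end Packing

/-- For a nonnegative system `Dx ≤ f` of `k` inequalities with
`D i j ≤ f i`, and a nonnegative objective `c`, the LP value is at most `(k+1)` times the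
IP value (in the extended reals). -/
theorem stmt13 {k n : ℕ} (D : Matrix (Fin k) (Fin n) ℝ) (f : Fin k → ℝ)
    (hD : ∀ i j, 0 ≤ D i j) (hf : ∀ i, 0 ≤ f i) (hDf : ∀ i j, D i j ≤ f i)
    (c : Fin n → ℝ) (hc : ∀ j, 0 ≤ c j) :
    supVal c {x | (∀ j, 0 ≤ x j) ∧ ∀ i, dotp (D i) x ≤ f i}
      ≤ ((k + 1 : ℝ) : EReal)
          * supVal c {x | (∀ j, 0 ≤ x j) ∧ isIntPt x ∧ ∀ i, dotp (D i) x ≤ f i} := by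
  change supVal c (packLP D f) ≤ _ * supVal c (packIP D f)
  have h0 : (0 : EReal) ≤ supVal c (packIP D f) := by
    simpa [dotp] using le_supVal c (zero_mem_packIP (A := D) hf)
  induction hM : supVal c (packIP D f) using EReal.rec with
  | bot => simp [hM] at h0
  | top => exact le_top.trans_eq (EReal.mul_top_of_pos (by positivity)).symm
  | coe M =>
    rw [← EReal.coe_mul, supVal_le_coe_iff]
    exact fun x hx => dotp_le_of_packIP_bound hD hf hDf hc (supVal_le_coe_iff.1 hM.le) hx
end
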